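/- arXiv:2506.22228 — 2 statements merged into one kernel-verified Lean document; each statement's English description precedes it below -/
import Mathlib

section
/- Fix an integer k ≥ 1 and a constant τ ∈ (0,1). For every Λ ≥ 1 there exists N such that for all n ≥ N the following holds: no global maximizer y* = (y*_1, …, y*_n) ∈ (ℝ²)^n of the t-SNE objective C for the discrete circle P_n with neighbor parameter k induces a map φ* : x_i ↦ y*_i that is bilipschitz with scaling factor S = n^τ and distortion factor L ≤ Λ. Equivalently, if for each n the optimal t-SNE embedding φ*_n of P_n is bilipschitz with scaling factor n^τ and (minimal) distortion factor L_n, then L_n → ∞ as n → ∞. -/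
open Real Finset

/-- The `i`-th point of the discrete circle `P_n ⊂ ℝ²`:
`x_i = (cos(2πi/n), sin(2πi/n))`. -/
noncomputable def circlePt (n : ℕ) (i : Fin n) : EuclideanSpace ℝ (Fin 2) :=
  WithLp.toLp 2 (fun j : Fin 2 => if j = 0 then Real.cos (2 * Real.pi * (i.val : ℝ) / n)
           else Real.sin (2 * Real.pi * (i.val : ℝ) / n))

/-- The normalizing constant `Z(y) = Σ_{k'≠ℓ'} (1 + ‖y_{k'} − y_{ℓ'}‖²)⁻¹`,
summed over all ordered pairs of distinct indices. -/
noncomputable def tsneZ {n : ℕ} (y : Fin n → EuclideanSpace ℝ (Fin 2)) : ℝ :=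
  ∑ p ∈ Finset.univ.filter (fun p : Fin n × Fin n => p.1 ≠ p.2),
    (1 + ‖y p.1 - y p.2‖ ^ 2)⁻¹

/-- The t-SNE objective `C(y) = Σ_{(i,j) ∈ 𝒩} log q_{ij}` with
`q_{ij} = (1 + ‖y_i − y_j‖²)⁻¹ / Z(y)` and
`𝒩 = {(i,j) : 1 ≤ (j − i) mod n ≤ k}` (so `|𝒩| = nk`). -/
noncomputable def tsneObj (n k : ℕ) (y : Fin n → EuclideanSpace ℝ (Fin 2)) : ℝ :=
  ∑ p ∈ Finset.univ.filter
      (fun p : Fin n × Fin n => 1 ≤ (p.2 - p.1).val ∧ (p.2 - p.1).val ≤ k),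
    Real.log ((1 + ‖y p.1 - y p.2‖ ^ 2)⁻¹ / tsneZ y)

/-!
If `y` is `S`-Lipschitz on the discrete circle, every pair of indices at circular offset at
most `D` is embedded at distance `≤ 2πSD/n`; with `S = n^τ L` this is `≤ 1` for any fixed `D`
once `n` is large, so the normaliser satisfies `Z(y) ≥ nD/2`. Since `q_ij ≤ 1/Z(y)`, the
objective of `y` is at most `-nk log Z(y)`. The circle scaled by `n` has neighbour distances
`≤ 2πk`, and its normaliser is `≤ 4n` because distances grow like the circular offset and
`∑ 1/m² ≤ 2`; so its objective is at least `-nk (log (1 + (2πk)²) + log 4n)`. Optimality of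
`y` then forces `Z(y) ≤ 4 (1 + (2πk)²) n`, which fails for `D > 8 (1 + (2πk)²)`.
-/

section

variable {n k : ℕ}

lemma sqrt_sq_cos_sub_add_sq_sin_sub (A B : ℝ) :
    √((cos A - cos B) ^ 2 + (sin A - sin B) ^ 2) = 2 * |sin ((A - B) / 2)| := by
  have h : (cos A - cos B) ^ 2 + (sin A - sin B) ^ 2 = (2 * sin ((A - B) / 2)) ^ 2 := by
    have hc := cos_sq ((A - B) / 2)
    rw [show 2 * ((A - B) / 2) = A - B by ring, cos_sub] at hc
    nlinarith [sin_sq_add_cos_sq ((A - B) / 2), sin_sq_add_cos_sq A, sin_sq_add_cos_sq B]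
  rw [h, sqrt_sq_eq_abs, abs_mul, abs_two]

lemma norm_circlePt_sub_eq_abs (i j : Fin n) :
    ‖circlePt n i - circlePt n j‖ = 2 * |sin (π * ((i : ℝ) - j) / n)| := by
  rw [EuclideanSpace.norm_eq, Fin.sum_univ_two]
  simp only [circlePt, PiLp.sub_apply, Fin.isValue, ↓reduceIte, one_ne_zero, norm_eq_abs, sq_abs]
  rw [sqrt_sq_cos_sub_add_sq_sin_sub]
  ring_nf

lemma norm_circlePt_sub (i j : Fin n) :
    ‖circlePt n i - circlePt n j‖ = 2 * sin (π * (j - i).val / n) := by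
  have hn : (0 : ℝ) < n := by have := i.pos; exact_mod_cast this
  have hsin : 0 ≤ sin (π * (j - i).val / n) := by
    apply sin_nonneg_of_nonneg_of_le_pi (by positivity)
    rw [div_le_iff₀ hn]
    have : ((j - i).val : ℝ) ≤ n := by exact_mod_cast (j - i).isLt.le
    nlinarith [pi_pos]
  rw [norm_circlePt_sub_eq_abs, ← abs_of_nonneg hsin]
  congr 1
  rcases le_or_gt i j with h | h
  · rw [Fin.coe_sub_iff_le.mpr h, Nat.cast_sub h, ← abs_neg, ← sin_neg]
    ring_nf
  · rw [Fin.coe_sub_iff_lt.mpr h, Nat.cast_sub (by omega), Nat.cast_add,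
      show π * ((n : ℝ) + j - i) / n = π * ((j : ℝ) - i) / n + π by field_simp; ring,
      sin_add_pi, abs_neg, ← abs_neg, ← sin_neg]
    ring_nf

lemma norm_circlePt_sub_le (i j : Fin n) :
    ‖circlePt n i - circlePt n j‖ ≤ 2 * π * (j - i).val / n := by
  have := sin_le (x := π * (j - i).val / n) (by positivity)
  rw [norm_circlePt_sub]
  linarith [show 2 * π * (j - i).val / n = 2 * (π * (j - i).val / n) by ring]

lemma val_sub_add_val_sub_le [NeZero n] (i j : Fin n) : (j - i).val + (i - j).val ≤ n := by
  rcases lt_trichotomy i j with h | rfl | h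
  · rw [Fin.coe_sub_iff_le.mpr h.le, Fin.coe_sub_iff_lt.mpr h]; omega
  · simp
  · rw [Fin.coe_sub_iff_le.mpr h.le, Fin.coe_sub_iff_lt.mpr h]; omega

lemma four_mul_val_sub_le_mul_norm_circlePt_sub {i j : Fin n}
    (h : 2 * (j - i).val ≤ n) :
    4 * ((j - i).val : ℝ) ≤ n * ‖circlePt n i - circlePt n j‖ := by
  have hn : (0 : ℝ) < n := by have := i.pos; exact_mod_cast this
  have h' : 2 * ((j - i).val : ℝ) ≤ n := by exact_mod_cast h
  have hjordan := mul_le_sin (x := π * (j - i).val / n) (by positivity) (by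
    rw [div_le_div_iff₀ hn two_pos]; nlinarith [pi_pos])
  rw [norm_circlePt_sub]
  calc 4 * ((j - i).val : ℝ) = n * (2 * (2 / π * (π * (j - i).val / n))) := by
        field_simp; ring
    _ ≤ n * (2 * sin (π * (j - i).val / n)) := by gcongr

lemma four_mul_min_le_mul_norm_circlePt_sub [NeZero n] (i j : Fin n) :
    4 * (min (j - i).val (i - j).val : ℝ) ≤ n * ‖circlePt n i - circlePt n j‖ := by
  have hsum := val_sub_add_val_sub_le i j
  rcases le_total (j - i).val (i - j).val with h | h
  · rw [min_eq_left (by exact_mod_cast h)]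
    exact four_mul_val_sub_le_mul_norm_circlePt_sub (by omega)
  · rw [min_eq_right (by exact_mod_cast h), norm_sub_rev]
    exact four_mul_val_sub_le_mul_norm_circlePt_sub (by omega)

lemma inv_one_add_sq_norm_smul_circlePt_sub_le [NeZero n] {i j : Fin n} (hij : i ≠ j) :
    (1 + ‖(n : ℝ) • circlePt n i - (n : ℝ) • circlePt n j‖ ^ 2)⁻¹ ≤
      (((j - i).val : ℝ) ^ 2)⁻¹ + (((i - j).val : ℝ) ^ 2)⁻¹ := by
  have ha : 1 ≤ (j - i).val :=
    Nat.one_le_iff_ne_zero.mpr (Fin.val_ne_zero_iff.mpr (sub_ne_zero.mpr hij.symm))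
  have hb : 1 ≤ (i - j).val :=
    Nat.one_le_iff_ne_zero.mpr (Fin.val_ne_zero_iff.mpr (sub_ne_zero.mpr hij))
  set m : ℝ := min (j - i).val (i - j).val
  have hm : 1 ≤ m := le_min (by exact_mod_cast ha) (by exact_mod_cast hb)
  have hdist : m ≤ ‖(n : ℝ) • circlePt n i - (n : ℝ) • circlePt n j‖ := by
    rw [← smul_sub, norm_smul, norm_natCast]
    linarith [four_mul_min_le_mul_norm_circlePt_sub i j]
  calc (1 + ‖(n : ℝ) • circlePt n i - (n : ℝ) • circlePt n j‖ ^ 2)⁻¹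
        ≤ (m ^ 2)⁻¹ := by
        gcongr; nlinarith
    _ ≤ (((j - i).val : ℝ) ^ 2)⁻¹ + (((i - j).val : ℝ) ^ 2)⁻¹ := by
        rcases min_choice ((j - i).val : ℝ) (i - j).val with h | h <;> rw [show m = _ from h] <;>
          simp only [le_add_iff_nonneg_left, le_add_iff_nonneg_right] <;> positivity

lemma sum_prod_fin_sub {M : Type*} [AddCommMonoid M] [NeZero n] (f : Fin n → M) :
    ∑ p : Fin n × Fin n, f (p.2 - p.1) = n • ∑ c, f c :=
  calc ∑ p : Fin n × Fin n, f (p.2 - p.1) = ∑ i : Fin n, ∑ j, f (j - i) :=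
        Fintype.sum_prod_type _
    _ = ∑ _i : Fin n, ∑ c, f c := sum_congr rfl fun i _ => (Equiv.subRight i).sum_comp f
    _ = n • ∑ c, f c := by rw [sum_const, card_univ, Fintype.card_fin]

lemma sum_fin_inv_sq_le_two : ∑ c : Fin n, ((c.val : ℝ) ^ 2)⁻¹ ≤ 2 := by
  rw [Fin.sum_univ_eq_sum_range (fun m => ((m : ℝ) ^ 2)⁻¹) n]
  calc ∑ m ∈ range n, ((m : ℝ) ^ 2)⁻¹ = ∑ m ∈ Ioo 0 n, ((m : ℝ) ^ 2)⁻¹ := by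
        refine (sum_subset (fun m hm => ?_) fun m hm hm' => ?_).symm
        · simp only [mem_Ioo, mem_range] at hm ⊢; exact hm.2
        · rw [mem_range] at hm
          rw [mem_Ioo] at hm'
          obtain rfl : m = 0 := by omega
          simp
    _ ≤ 2 := (sum_Ioo_inv_sq_le 0 n).trans_eq (by norm_num)

theorem tsneZ_smul_circlePt_le [NeZero n] :
    tsneZ (fun i => (n : ℝ) • circlePt n i) ≤ 4 * n := by
  set g : Fin n → ℝ := fun c => ((c.val : ℝ) ^ 2)⁻¹
  calc tsneZ (fun i => (n : ℝ) • circlePt n i)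
      ≤ ∑ p ∈ univ.filter (fun p : Fin n × Fin n => p.1 ≠ p.2),
          (g (p.2 - p.1) + g (-(p.2 - p.1))) :=
        sum_le_sum fun p hp => by
          rw [neg_sub]; exact inv_one_add_sq_norm_smul_circlePt_sub_le (mem_filter.mp hp).2
    _ ≤ ∑ p : Fin n × Fin n, (g (p.2 - p.1) + g (-(p.2 - p.1))) :=
        sum_le_sum_of_subset_of_nonneg (filter_subset _ _) fun _ _ _ => by positivity
    _ = n * (2 * ∑ c, g c) := by
        have hneg : ∑ c, g (-c) = ∑ c, g c := Equiv.sum_comp (Equiv.neg (Fin n)) g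
        rw [sum_prod_fin_sub (fun c => g c + g (-c)), sum_add_distrib, hneg, nsmul_eq_mul]
        ring
    _ ≤ n * (2 * 2) := by gcongr; exact sum_fin_inv_sq_le_two
    _ = 4 * n := by ring

def neighborPairs (n k : ℕ) : Finset (Fin n × Fin n) :=
  univ.filter fun p => 1 ≤ (p.2 - p.1).val ∧ (p.2 - p.1).val ≤ k

lemma ne_of_mem_neighborPairs {p : Fin n × Fin n} (hp : p ∈ neighborPairs n k) :
    p.1 ≠ p.2 := by
  intro h
  have := (mem_filter.mp hp).2.1
  rw [h, Fin.coe_sub_iff_le.mpr le_rfl, Nat.sub_self] at this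
  exact Nat.not_succ_le_zero 0 this

lemma card_neighborPairs [NeZero n] (hk : k < n) : #(neighborPairs n k) = n * k := by
  have hcount : #(univ.filter fun c : Fin n => 1 ≤ c.val ∧ c.val ≤ k) = k := by
    rw [card_filter, Fin.sum_univ_eq_sum_range (fun m => if 1 ≤ m ∧ m ≤ k then 1 else 0) n,
      ← card_filter, show (range n).filter (fun m => 1 ≤ m ∧ m ≤ k) = Icc 1 k by
        ext m; simp only [mem_filter, mem_range, mem_Icc]; omega]
    simp
  rw [neighborPairs, card_filter,
    sum_prod_fin_sub (fun c : Fin n => if 1 ≤ c.val ∧ c.val ≤ k then 1 else 0),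
    ← card_filter, hcount, smul_eq_mul]

lemma neighborPairs_nonempty (hk : 1 ≤ k) (hn : 2 ≤ n) : (neighborPairs n k).Nonempty := by
  refine ⟨(⟨0, by omega⟩, ⟨1, by omega⟩), mem_filter.mpr ⟨mem_univ _, ?_⟩⟩
  rw [Fin.coe_sub_iff_le.mpr (Fin.mk_le_mk.mpr zero_le_one)]
  dsimp only
  omega

lemma tsneZ_pos (hn : 2 ≤ n) (y : Fin n → EuclideanSpace ℝ (Fin 2)) : 0 < tsneZ y :=
  sum_pos (fun _ _ => by positivity)
    ⟨(⟨0, by omega⟩, ⟨1, by omega⟩),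
      mem_filter.mpr ⟨mem_univ _, fun h => absurd (congrArg Fin.val h) (by simp)⟩⟩

lemma tsneObj_eq {y : Fin n → EuclideanSpace ℝ (Fin 2)} (hZ : 0 < tsneZ y) :
    tsneObj n k y = -∑ p ∈ neighborPairs n k, log (1 + ‖y p.1 - y p.2‖ ^ 2)
      - #(neighborPairs n k) * log (tsneZ y) := by
  have hterm (p : Fin n × Fin n) : log ((1 + ‖y p.1 - y p.2‖ ^ 2)⁻¹ / tsneZ y) =
      -log (1 + ‖y p.1 - y p.2‖ ^ 2) - log (tsneZ y) := by
    rw [log_div (by positivity) hZ.ne', log_inv]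
  change ∑ p ∈ neighborPairs n k, _ = _
  rw [sum_congr rfl fun p _ => hterm p, sum_sub_distrib, sum_neg_distrib, sum_const,
    nsmul_eq_mul]

theorem tsneZ_le_of_tsneObj_le (hk : 1 ≤ k) (hn : 2 ≤ n)
    {y y' : Fin n → EuclideanSpace ℝ (Fin 2)} (hopt : tsneObj n k y' ≤ tsneObj n k y)
    {R : ℝ}
    (hR : ∀ p ∈ neighborPairs n k, ‖y' p.1 - y' p.2‖ ≤ R) :
    tsneZ y ≤ (1 + R ^ 2) * tsneZ y' := by
  have hZ := tsneZ_pos hn y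
  have hZ' := tsneZ_pos hn y'
  have hM : (0 : ℝ) < #(neighborPairs n k) := by
    exact_mod_cast (neighborPairs_nonempty hk hn).card_pos
  have hlog' : ∑ p ∈ neighborPairs n k, log (1 + ‖y' p.1 - y' p.2‖ ^ 2)
      ≤ #(neighborPairs n k) * log (1 + R ^ 2) := by
    rw [← nsmul_eq_mul]
    refine sum_le_card_nsmul _ _ _ fun p hp => log_le_log (by positivity) ?_
    gcongr
    exact hR p hp
  have hlog : 0 ≤ ∑ p ∈ neighborPairs n k, log (1 + ‖y p.1 - y p.2‖ ^ 2) :=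
    sum_nonneg fun p _ => log_nonneg (le_add_of_nonneg_right (sq_nonneg _))
  rw [tsneObj_eq hZ, tsneObj_eq hZ'] at hopt
  rw [← log_le_log_iff hZ (by positivity), log_mul (by positivity) hZ'.ne']
  exact le_of_mul_le_mul_left (by linarith) hM

lemma norm_circlePt_sub_le_of_mem_neighborPairs {p : Fin n × Fin n}
    (hp : p ∈ neighborPairs n k) :
    ‖circlePt n p.1 - circlePt n p.2‖ ≤ 2 * π * k / n := by
  refine (norm_circlePt_sub_le p.1 p.2).trans ?_
  gcongr
  exact_mod_cast (mem_filter.mp hp).2.2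

lemma norm_sub_le_of_mem_neighborPairs {S : ℝ} (hS : 0 ≤ S)
    {y : Fin n → EuclideanSpace ℝ (Fin 2)}
    (hy : ∀ i j, i ≠ j → ‖y i - y j‖ ≤ S * ‖circlePt n i - circlePt n j‖)
    {p : Fin n × Fin n} (hp : p ∈ neighborPairs n k) :
    ‖y p.1 - y p.2‖ ≤ 2 * π * S * k / n :=
  calc ‖y p.1 - y p.2‖ ≤ S * (2 * π * k / n) :=
        (hy _ _ (ne_of_mem_neighborPairs hp)).trans
          (mul_le_mul_of_nonneg_left (norm_circlePt_sub_le_of_mem_neighborPairs hp) hS)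
    _ = 2 * π * S * k / n := by ring

lemma norm_smul_circlePt_sub_le_of_mem_neighborPairs {p : Fin n × Fin n}
    (hp : p ∈ neighborPairs n k) :
    ‖(n : ℝ) • circlePt n p.1 - (n : ℝ) • circlePt n p.2‖ ≤ 2 * π * k := by
  have hn : (0 : ℝ) < n := by have := p.1.pos; exact_mod_cast this
  rw [← smul_sub, norm_smul, norm_natCast]
  calc (n : ℝ) * ‖circlePt n p.1 - circlePt n p.2‖ ≤ n * (2 * π * k / n) := by
        gcongr; exact norm_circlePt_sub_le_of_mem_neighborPairs hp
    _ = 2 * π * k := by field_simp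

theorem mul_div_two_le_tsneZ [NeZero n] {D : ℕ} (hD : D < n)
    {y : Fin n → EuclideanSpace ℝ (Fin 2)}
    (hy : ∀ p ∈ neighborPairs n D, ‖y p.1 - y p.2‖ ≤ 1) : (n * D : ℝ) / 2 ≤ tsneZ y :=
  calc (n * D : ℝ) / 2 = ∑ p ∈ neighborPairs n D, (2 : ℝ)⁻¹ := by
        rw [sum_const, card_neighborPairs hD, nsmul_eq_mul]; push_cast; ring
    _ ≤ ∑ p ∈ neighborPairs n D, (1 + ‖y p.1 - y p.2‖ ^ 2)⁻¹ :=
        sum_le_sum fun p hp => by gcongr; nlinarith [hy p hp, norm_nonneg (y p.1 - y p.2)]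
    _ ≤ tsneZ y := sum_le_sum_of_subset_of_nonneg
        (fun p hp => mem_filter.mpr ⟨mem_univ _, ne_of_mem_neighborPairs hp⟩)
        fun _ _ _ => by positivity

lemma eventually_mul_rpow_le {τ : ℝ} (hτ : τ < 1) (C : ℝ) :
    ∀ᶠ n : ℕ in Filter.atTop, C * (n : ℝ) ^ τ ≤ n := by
  have h := ((tendsto_rpow_atTop (sub_pos.mpr hτ)).comp
    tendsto_natCast_atTop_atTop).eventually_ge_atTop C
  filter_upwards [h, Filter.eventually_gt_atTop 0] with n hC hn
  have hn' : (0 : ℝ) < n := by exact_mod_cast hn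
  calc C * (n : ℝ) ^ τ ≤ (n : ℝ) ^ (1 - τ) * (n : ℝ) ^ τ := by gcongr; exact hC
    _ = n := by rw [← rpow_add hn', sub_add_cancel, rpow_one]

end

theorem stmt0_general (k : ℕ) (hk : 1 ≤ k) (τ : ℝ) (hτ1 : τ < 1)
    (Λ : ℝ) :
    ∃ N : ℕ, ∀ n : ℕ, N ≤ n → 2 * k < n →
      ∀ y : Fin n → EuclideanSpace ℝ (Fin 2),
        (∀ y' : Fin n → EuclideanSpace ℝ (Fin 2), tsneObj n k y' ≤ tsneObj n k y) →
        ¬ ∃ L : ℝ, 1 ≤ L ∧ L ≤ Λ ∧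
            ∀ i j : Fin n, i ≠ j →
              (n : ℝ) ^ τ * ‖circlePt n i - circlePt n j‖ ≤ ‖y i - y j‖ ∧
              ‖y i - y j‖ ≤ (n : ℝ) ^ τ * L * ‖circlePt n i - circlePt n j‖ := by
  obtain ⟨D, hD⟩ := exists_nat_gt (8 * (1 + (2 * π * k) ^ 2))
  obtain ⟨N, hN⟩ := Filter.eventually_atTop.mp
    ((eventually_mul_rpow_le hτ1 (2 * π * D * Λ)).and (Filter.eventually_gt_atTop D))
  refine ⟨N, fun n hNn hkn y hopt ⟨L, hL1, hLΛ, hbil⟩ => ?_⟩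
  obtain ⟨hscale, hDn⟩ := hN n hNn
  have hn : 2 ≤ n := by omega
  have : NeZero n := ⟨by omega⟩
  have hS : 2 * π * ((n : ℝ) ^ τ * L) * D / n ≤ 1 := by
    rw [div_le_one (by positivity)]
    calc 2 * π * ((n : ℝ) ^ τ * L) * D = 2 * π * D * L * (n : ℝ) ^ τ := by ring
      _ ≤ 2 * π * D * Λ * (n : ℝ) ^ τ := by gcongr
      _ ≤ n := hscale
  have hZlow : (n * D : ℝ) / 2 ≤ tsneZ y := mul_div_two_le_tsneZ hDn fun p hp =>
    (norm_sub_le_of_mem_neighborPairs (S := (n : ℝ) ^ τ * L) (by positivity)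
      (fun i j hij => (hbil i j hij).2) hp).trans hS
  have hZup : tsneZ y ≤ (1 + (2 * π * k) ^ 2) * tsneZ (fun i => (n : ℝ) • circlePt n i) :=
    tsneZ_le_of_tsneObj_le hk hn (hopt _) fun _ => norm_smul_circlePt_sub_le_of_mem_neighborPairs
  have hZcirc := mul_le_mul_of_nonneg_left (tsneZ_smul_circlePt_le (n := n))
    (by positivity : (0 : ℝ) ≤ 1 + (2 * π * k) ^ 2)
  have hcontra : (n : ℝ) * D ≤ n * (8 * (1 + (2 * π * k) ^ 2)) := by linarith
  linarith [le_of_mul_le_mul_left hcontra (by positivity)]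

/-- Fix an integer `k ≥ 1` and `τ ∈ (0,1)`. For every `Λ ≥ 1` there exists `N`
such that for all `n ≥ N` (with `k < n/2`): no global maximizer `y*` of the t-SNE objective
for the discrete circle `P_n` with neighbor parameter `k` induces a map `x_i ↦ y*_i` that is
bilipschitz with scaling factor `S = n^τ` and distortion factor `L ≤ Λ`. -/
theorem stmt0 (k : ℕ) (hk : 1 ≤ k) (τ : ℝ) (hτ0 : 0 < τ) (hτ1 : τ < 1)
    (Λ : ℝ) (hΛ : 1 ≤ Λ) :
    ∃ N : ℕ, ∀ n : ℕ, N ≤ n → 2 * k < n →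
      ∀ y : Fin n → EuclideanSpace ℝ (Fin 2),
        (∀ y' : Fin n → EuclideanSpace ℝ (Fin 2), tsneObj n k y' ≤ tsneObj n k y) →
        ¬ ∃ L : ℝ, 1 ≤ L ∧ L ≤ Λ ∧
            ∀ i j : Fin n, i ≠ j →
              (n : ℝ) ^ τ * ‖circlePt n i - circlePt n j‖ ≤ ‖y i - y j‖ ∧
              ‖y i - y j‖ ≤ (n : ℝ) ^ τ * L * ‖circlePt n i - circlePt n j‖ :=
  stmt0_general k hk τ hτ1 Λ
end

section
/- For every a > 0 there exist constants c_1, C_1 > 0 and N such that for all n ≥ N and all S ≥ a·n, one has c_1·n³/S² ≤ Σ_{k≠ℓ} 1/(1+S²‖x_k−x_ℓ‖²) ≤ C_1·n³/S², where the sum ranges over all ordered pairs of distinct indices k, ℓ ∈ {1,…,n} and x_i are the points of the discrete circle P_n. -/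
/-!
The squared chord between `x_k` and `x_ℓ` is `4 sin²(π d / n)` with `d = k - ℓ mod n`, so the sum
is `n` times a sum over the gaps `0 < d < n`. The gap `d = 1` alone, where `sin(π/n) ≤ π/n`,
gives the lower bound. For the upper bound, Jordan's inequality `sin t ≥ 2t/π` on `[0, π/2]`,
applied to `min(d, n - d)`, bounds each term by `n²/(16S²) (1/d² + 1/(n - d)²)`, and
`∑ 1/d² ≤ 2`.
-/

open Real Finset

theorem sum_filter_fst_ne_snd_sub {G M : Type*} [AddCommGroup G] [Fintype G] [DecidableEq G]
    [AddCommMonoid M] (f : G → M) :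
    ∑ p ∈ univ.filter (fun p : G × G => p.1 ≠ p.2), f (p.1 - p.2) =
      Fintype.card G • ∑ d ∈ univ.filter (· ≠ (0 : G)), f d := by
  rw [← card_univ, ← sum_const, ← sum_product']
  refine sum_nbij' (fun p => (p.1, p.1 - p.2)) (fun q => (q.1, q.1 - q.2)) ?_ ?_ ?_ ?_ ?_ <;>
    simp [sub_eq_zero, eq_comm (b := _ - _)]

theorem Fin.sum_filter_ne_zero_val {M : Type*} [AddCommMonoid M] {n : ℕ} [NeZero n]
    (f : ℕ → M) : ∑ d ∈ univ.filter (· ≠ (0 : Fin n)), f d.val = ∑ m ∈ Ioo 0 n, f m := by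
  refine sum_bij (fun d _ => d.val) ?_ (fun _ _ _ _ => Fin.ext) ?_ (fun _ _ => rfl)
  · intro d hd
    simp only [mem_filter, mem_univ, true_and] at hd
    simp [Nat.pos_iff_ne_zero, Fin.val_ne_zero_iff.mpr hd]
  · intro m hm
    rw [mem_Ioo] at hm
    refine ⟨⟨m, hm.2⟩, mem_filter.mpr ⟨mem_univ _, fun h => hm.1.ne' ?_⟩, rfl⟩
    simpa using congrArg Fin.val h

theorem sin_sq_add_int_mul_div (x : ℝ) (j : ℤ) {y : ℝ} (hy : y ≠ 0) :
    sin (π * (x + j * y) / y) ^ 2 = sin (π * x / y) ^ 2 := by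
  have h : ((-1 : ℝ) ^ j) ^ 2 = 1 := by
    rw [← zpow_natCast, ← zpow_mul, mul_comm, zpow_mul]; norm_num
  rw [show π * (x + j * y) / y = π * x / y + j * π by field_simp, sin_add_int_mul_pi, mul_pow, h,
    one_mul]

theorem cos_sub_cos_sq_add_sin_sub_sin_sq (x y : ℝ) :
    (cos x - cos y) ^ 2 + (sin x - sin y) ^ 2 = 4 * sin ((x - y) / 2) ^ 2 := by
  rw [sin_sq_eq_half_sub, show 2 * ((x - y) / 2) = x - y by ring, cos_sub]
  linear_combination sin_sq_add_cos_sq x + sin_sq_add_cos_sq y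

theorem norm_circlePt_sub_sq (n : ℕ) (k ℓ : Fin n) :
    ‖circlePt n k - circlePt n ℓ‖ ^ 2 = 4 * sin (π * ((k : ℝ) - ℓ) / n) ^ 2 := by
  rw [EuclideanSpace.norm_sq_eq, Fin.sum_univ_two]
  simp only [circlePt, PiLp.sub_apply, Fin.isValue, ↓reduceIte, one_ne_zero, norm_eq_abs, sq_abs]
  rw [cos_sub_cos_sq_add_sin_sub_sin_sq]
  ring_nf

theorem norm_circlePt_sub_sq_eq_val_sub (n : ℕ) (k ℓ : Fin n) :
    ‖circlePt n k - circlePt n ℓ‖ ^ 2 = 4 * sin (π * (k - ℓ : Fin n).val / n) ^ 2 := by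
  have hn : (n : ℝ) ≠ 0 := by have := k.pos; positivity
  obtain ⟨j, hj⟩ : ∃ j : ℤ, ((k - ℓ : Fin n).val : ℝ) = (k - ℓ : ℝ) + j * n := by
    refine ⟨-(((k : ℤ) - ℓ) / n), ?_⟩
    have := congrArg (fun z : ℤ => (z : ℝ)) (Fin.coe_int_sub_eq_mod k ℓ)
    rw [Int.emod_def] at this
    push_cast at this
    rw [this]; push_cast; ring
  rw [norm_circlePt_sub_sq, hj, sin_sq_add_int_mul_div _ _ hn]

theorem sum_offDiag_circlePt_eq (n : ℕ) [NeZero n] (f : ℝ → ℝ) :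
    ∑ p ∈ univ.filter (fun p : Fin n × Fin n => p.1 ≠ p.2),
        f (‖circlePt n p.1 - circlePt n p.2‖ ^ 2) =
      n * ∑ m ∈ Ioo 0 n, f (4 * sin (π * m / n) ^ 2) := by
  simp_rw [norm_circlePt_sub_sq_eq_val_sub]
  rw [sum_filter_fst_ne_snd_sub (fun d : Fin n => f (4 * sin (π * d.val / n) ^ 2)),
    Fin.sum_filter_ne_zero_val (fun m => f (4 * sin (π * m / n) ^ 2)), Fintype.card_fin,
    nsmul_eq_mul]

theorem two_mul_div_le_sin_pi_mul_div {x y : ℝ} (hx : 0 ≤ x) (hy : 0 < y) (hxy : 2 * x ≤ y) :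
    2 * x / y ≤ sin (π * x / y) := by
  have hjordan := mul_le_sin (x := π * x / y) (by positivity) (by
    rw [div_le_div_iff₀ hy two_pos]; nlinarith [pi_pos])
  calc 2 * x / y = 2 / π * (π * x / y) := by field_simp
    _ ≤ sin (π * x / y) := hjordan

theorem inv_sin_sq_pi_mul_div_le {x y : ℝ} (hx : 0 < x) (hxy : x < y) :
    (sin (π * x / y) ^ 2)⁻¹ ≤ y ^ 2 / 4 * ((x ^ 2)⁻¹ + ((y - x) ^ 2)⁻¹) := by
  have hy : 0 < y := hx.trans hxy
  wlog h : 2 * x ≤ y generalizing x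
  · have hsym := this (x := y - x) (by linarith) (by linarith) (by linarith)
    rwa [show π * (y - x) / y = π - π * x / y by field_simp, sin_pi_sub, sub_sub_cancel,
      add_comm] at hsym
  have hs := two_mul_div_le_sin_pi_mul_div hx.le hy h
  calc (sin (π * x / y) ^ 2)⁻¹ ≤ ((2 * x / y) ^ 2)⁻¹ :=
        inv_anti₀ (by positivity) (pow_le_pow_left₀ (by positivity) hs 2)
    _ = y ^ 2 / 4 * (x ^ 2)⁻¹ := by field_simp; ring
    _ ≤ y ^ 2 / 4 * ((x ^ 2)⁻¹ + ((y - x) ^ 2)⁻¹) := by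
        gcongr; exact le_add_of_nonneg_right (by positivity)

theorem inv_one_add_mul_sin_sq_le {S x y : ℝ} (hS : 0 < S) (hx : 0 < x) (hxy : x < y) :
    (1 + S ^ 2 * (4 * sin (π * x / y) ^ 2))⁻¹ ≤
      y ^ 2 / (16 * S ^ 2) * ((x ^ 2)⁻¹ + ((y - x) ^ 2)⁻¹) := by
  have hsin : 0 < sin (π * x / y) := by
    have hy := hx.trans hxy
    refine sin_pos_of_pos_of_lt_pi (by positivity) ?_
    rw [div_lt_iff₀ hy]; nlinarith [pi_pos]
  calc (1 + S ^ 2 * (4 * sin (π * x / y) ^ 2))⁻¹ ≤ (S ^ 2 * (4 * sin (π * x / y) ^ 2))⁻¹ :=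
        inv_anti₀ (by positivity) (by linarith)
    _ = (4 * S ^ 2)⁻¹ * (sin (π * x / y) ^ 2)⁻¹ := by rw [← mul_inv]; ring_nf
    _ ≤ (4 * S ^ 2)⁻¹ * (y ^ 2 / 4 * ((x ^ 2)⁻¹ + ((y - x) ^ 2)⁻¹)) := by
        gcongr; exact inv_sin_sq_pi_mul_div_le hx hxy
    _ = y ^ 2 / (16 * S ^ 2) * ((x ^ 2)⁻¹ + ((y - x) ^ 2)⁻¹) := by ring

theorem sum_Ioo_inv_sub_sq (n : ℕ) :
    ∑ m ∈ Ioo 0 n, (((n : ℝ) - m) ^ 2)⁻¹ = ∑ m ∈ Ioo 0 n, ((m : ℝ) ^ 2)⁻¹ := by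
  refine sum_nbij' (n - ·) (n - ·) ?_ ?_ ?_ ?_ ?_ <;> intro m hm <;> rw [mem_Ioo] at hm
  all_goals first | omega | (rw [mem_Ioo]; omega) | rw [Nat.cast_sub hm.2.le]

theorem sum_Ioo_inv_one_add_mul_sin_sq_le (n : ℕ) {S : ℝ} (hS : 0 < S) :
    ∑ m ∈ Ioo 0 n, (1 + S ^ 2 * (4 * sin (π * m / n) ^ 2))⁻¹ ≤ n ^ 2 / (4 * S ^ 2) := by
  calc ∑ m ∈ Ioo 0 n, (1 + S ^ 2 * (4 * sin (π * m / n) ^ 2))⁻¹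
      ≤ ∑ m ∈ Ioo 0 n, (n : ℝ) ^ 2 / (16 * S ^ 2) * (((m : ℝ) ^ 2)⁻¹ + (((n : ℝ) - m) ^ 2)⁻¹) :=
        sum_le_sum fun m hm => by
          rw [mem_Ioo] at hm
          exact inv_one_add_mul_sin_sq_le hS (by exact_mod_cast hm.1) (by exact_mod_cast hm.2)
    _ = (n : ℝ) ^ 2 / (16 * S ^ 2) *
          (∑ m ∈ Ioo 0 n, ((m : ℝ) ^ 2)⁻¹ + ∑ m ∈ Ioo 0 n, ((m : ℝ) ^ 2)⁻¹) := by
        rw [← mul_sum, sum_add_distrib, sum_Ioo_inv_sub_sq]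
    _ ≤ (n : ℝ) ^ 2 / (16 * S ^ 2) * (2 + 2) := by
        have := sum_Ioo_inv_sq_le (α := ℝ) 0 n
        norm_num at this
        gcongr
    _ = n ^ 2 / (4 * S ^ 2) := by ring

theorem div_sq_le_inv_one_add_mul_sin_sq_pi_div {a S y : ℝ} (ha : 0 < a) (hy : 0 < y)
    (hS : a * y ≤ S) :
    (a⁻¹ ^ 2 + 4 * π ^ 2)⁻¹ * (y ^ 2 / S ^ 2) ≤ (1 + S ^ 2 * (4 * sin (π / y) ^ 2))⁻¹ := by
  have hS0 : 0 < S := (by positivity : 0 < a * y).trans_le hS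
  have hone : 1 ≤ a⁻¹ ^ 2 * (S ^ 2 / y ^ 2) := by
    rw [show a⁻¹ ^ 2 * (S ^ 2 / y ^ 2) = (S / (a * y)) ^ 2 by field_simp]
    exact one_le_pow₀ ((one_le_div (by positivity)).mpr hS)
  have hsin : S ^ 2 * (4 * sin (π / y) ^ 2) ≤ 4 * π ^ 2 * (S ^ 2 / y ^ 2) := by
    have := sin_sq_le_sq (x := π / y)
    rw [div_pow] at this
    calc S ^ 2 * (4 * sin (π / y) ^ 2) ≤ S ^ 2 * (4 * (π ^ 2 / y ^ 2)) := by gcongr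
      _ = 4 * π ^ 2 * (S ^ 2 / y ^ 2) := by ring
  rw [← inv_div, ← mul_inv]
  exact inv_anti₀ (by positivity) (by linarith)

/-- For every `a > 0` there exist constants `c₁, C₁ > 0` and `N` such that
for all `n ≥ N` and all `S ≥ a·n`,
`c₁ n³/S² ≤ Σ_{k ≠ ℓ} 1/(1 + S²‖x_k − x_ℓ‖²) ≤ C₁ n³/S²`,
the sum over all ordered pairs of distinct indices of points of the discrete circle. -/
theorem stmt1 (a : ℝ) (ha : 0 < a) :
    ∃ c₁ C₁ : ℝ, 0 < c₁ ∧ 0 < C₁ ∧ ∃ N : ℕ, ∀ n : ℕ, N ≤ n →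
      ∀ S : ℝ, a * (n : ℝ) ≤ S →
        c₁ * ((n : ℝ) ^ 3 / S ^ 2) ≤
          (∑ p ∈ Finset.univ.filter (fun p : Fin n × Fin n => p.1 ≠ p.2),
            (1 + S ^ 2 * ‖circlePt n p.1 - circlePt n p.2‖ ^ 2)⁻¹) ∧
        (∑ p ∈ Finset.univ.filter (fun p : Fin n × Fin n => p.1 ≠ p.2),
            (1 + S ^ 2 * ‖circlePt n p.1 - circlePt n p.2‖ ^ 2)⁻¹) ≤
          C₁ * ((n : ℝ) ^ 3 / S ^ 2) := by
  refine ⟨(a⁻¹ ^ 2 + 4 * π ^ 2)⁻¹, 1, by positivity, one_pos, 2, fun n hn S hS => ?_⟩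
  have : NeZero n := ⟨by omega⟩
  have hn0 : (0 : ℝ) < n := Nat.cast_pos.mpr (by omega)
  have hS0 : 0 < S := (by positivity : 0 < a * n).trans_le hS
  rw [sum_offDiag_circlePt_eq n (fun t => (1 + S ^ 2 * t)⁻¹)]
  constructor
  · have hgap : 1 ∈ Ioo 0 n := mem_Ioo.mpr ⟨one_pos, hn⟩
    calc (a⁻¹ ^ 2 + 4 * π ^ 2)⁻¹ * ((n : ℝ) ^ 3 / S ^ 2)
        = (n : ℝ) * ((a⁻¹ ^ 2 + 4 * π ^ 2)⁻¹ * ((n : ℝ) ^ 2 / S ^ 2)) := by ring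
      _ ≤ (n : ℝ) * (1 + S ^ 2 * (4 * sin (π * ((1 : ℕ) : ℝ) / n) ^ 2))⁻¹ := by
        rw [Nat.cast_one, mul_one]
        gcongr
        exact div_sq_le_inv_one_add_mul_sin_sq_pi_div ha hn0 hS
      _ ≤ (n : ℝ) * ∑ m ∈ Ioo 0 n, (1 + S ^ 2 * (4 * sin (π * m / n) ^ 2))⁻¹ := by
        gcongr
        exact single_le_sum (f := fun m : ℕ => (1 + S ^ 2 * (4 * sin (π * m / n) ^ 2))⁻¹)
          (fun m _ => by positivity) hgap
  · calc (n : ℝ) * ∑ m ∈ Ioo 0 n, (1 + S ^ 2 * (4 * sin (π * m / n) ^ 2))⁻¹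
        ≤ (n : ℝ) * (n ^ 2 / (4 * S ^ 2)) := by
          gcongr
          exact sum_Ioo_inv_one_add_mul_sin_sq_le n hS0
      _ ≤ 1 * ((n : ℝ) ^ 3 / S ^ 2) := by
          rw [mul_div_assoc', ← pow_succ', one_mul]
          gcongr
          linarith [sq_nonneg S]
end
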